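/- arXiv:1511.01885 — 5 statements merged into one kernel-verified Lean document; each statement's English description precedes it below -/
import Mathlib

section
/- Let u be a classical solution of the regularized problem with boundary value ε on Ω × (0,∞), and suppose that u(x,0) ≥ ε for all x ∈ Ω. Then u(x,t) ≥ ε for all x ∈ Ω and all t > 0. -/
open MeasureTheory Set

noncomputable def lapl {n : ℕ} (f : EuclideanSpace ℝ (Fin n) → ℝ)
    (x : EuclideanSpace ℝ (Fin n)) : ℝ :=
  ∑ i : Fin n, fderiv ℝ (fun y => fderiv ℝ f y (EuclideanSpace.single i 1)) x
      (EuclideanSpace.single i 1)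

/-- A classical solution of the regularized problem
`uₜ = uΔu + u·min(1/ε, ∫_Ω |∇u|²)`, `u|_{∂Ω} = ε`, on `Ω × (0,∞)`. -/
structure IsRegSol (n : ℕ) (Ω : Set (EuclideanSpace ℝ (Fin n))) (ε : ℝ)
    (u : EuclideanSpace ℝ (Fin n) → ℝ → ℝ) : Prop where
  cont : ContinuousOn (fun p : EuclideanSpace ℝ (Fin n) × ℝ => u p.1 p.2)
      (closure Ω ×ˢ Ici (0 : ℝ))
  pos : ∀ x ∈ closure Ω, ∀ t : ℝ, 0 < t → 0 < u x t
  diff_t : ∀ x ∈ closure Ω, ∀ t : ℝ, 0 < t → DifferentiableAt ℝ (u x) t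
  diff_x : ∀ x ∈ closure Ω, ∀ t : ℝ, 0 < t → DifferentiableAt ℝ (fun y => u y t) x
  diff_xx : ∀ x ∈ closure Ω, ∀ t : ℝ, 0 < t → ∀ i : Fin n,
      DifferentiableAt ℝ
        (fun y => fderiv ℝ (fun z => u z t) y (EuclideanSpace.single i 1)) x
  cont_dt : ContinuousOn (fun p : EuclideanSpace ℝ (Fin n) × ℝ => deriv (u p.1) p.2)
      (closure Ω ×ˢ Ioi (0 : ℝ))
  cont_grad : ContinuousOn
      (fun p : EuclideanSpace ℝ (Fin n) × ℝ => gradient (fun y => u y p.2) p.1)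
      (closure Ω ×ˢ Ioi (0 : ℝ))
  cont_lap : ContinuousOn
      (fun p : EuclideanSpace ℝ (Fin n) × ℝ => lapl (fun y => u y p.2) p.1)
      (closure Ω ×ˢ Ioi (0 : ℝ))
  eqn : ∀ x ∈ Ω, ∀ t : ℝ, 0 < t →
      deriv (u x) t =
        u x t * lapl (fun y => u y t) x +
          u x t * min (1 / ε) (∫ y in Ω, ‖gradient (fun z => u z t) y‖ ^ 2)
  bdry : ∀ x ∈ frontier Ω, ∀ t : ℝ, 0 < t → u x t = ε

open Filter Topology

/-- If the second derivative of a real function exists at a local minimum,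
it is nonnegative. -/
lemma aux_secondDeriv_nonneg {g : ℝ → ℝ} {a L : ℝ}
    (hmin : IsLocalMin g a)
    (hdiff : ∀ᶠ s in nhds a, DifferentiableAt ℝ g s)
    (hL : HasDerivAt (deriv g) L a) : 0 ≤ L := by
  have hslope : Tendsto (slope (deriv g) a) (𝓝[≠] a) (𝓝 L) :=
    hasDerivAt_iff_tendsto_slope.mp hL
  have hslope' : Tendsto (slope (deriv g) a) (𝓝[>] a) (𝓝 L) :=
    hslope.mono_left (nhdsWithin_mono a fun x hx => ne_of_gt hx)
  have hda : deriv g a = 0 := hmin.deriv_eq_zero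
  have hfreq : ∃ᶠ s in 𝓝[>] a, 0 ≤ deriv g s := by
    rw [frequently_iff]
    intro U hU
    obtain ⟨u, hau, hsub⟩ := mem_nhdsGT_iff_exists_Ioo_subset.mp hU
    obtain ⟨r, hr, hball⟩ := Metric.eventually_nhds_iff_ball.mp (hmin.and hdiff)
    set b := min u (a + r / 2) with hb
    have hab : a < b := lt_min hau (by linarith)
    have hbr : ∀ s ∈ Icc a b, (g a ≤ g s ∧ DifferentiableAt ℝ g s) := by
      intro s hs
      apply hball
      rw [Metric.mem_ball, Real.dist_eq, abs_of_nonneg (by linarith [hs.1])]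
      have : b ≤ a + r / 2 := min_le_right _ _
      linarith [hs.2]
    obtain ⟨c, hc, hderiv⟩ := exists_deriv_eq_slope g hab
      (fun s hs => ((hbr s hs).2).continuousAt.continuousWithinAt)
      (fun s hs => ((hbr s ⟨le_of_lt hs.1, le_of_lt hs.2⟩).2).differentiableWithinAt)
    refine ⟨c, hsub ⟨hc.1, lt_of_lt_of_le hc.2 (min_le_left _ _)⟩, ?_⟩
    rw [hderiv]
    apply div_nonneg _ (by linarith [hc.1, hc.2, hab])
    linarith [(hbr b ⟨le_of_lt hab, le_refl b⟩).1]
  have hfreq2 : ∃ᶠ s in 𝓝[>] a, 0 ≤ slope (deriv g) a s := by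
    refine hfreq.mp (eventually_mem_nhdsWithin.mono ?_)
    intro s hs h0
    rw [slope_def_field, hda]
    exact div_nonneg (by simpa using h0) (by linarith [mem_Ioi.mp hs])
  exact isClosed_Ici.mem_of_frequently_of_tendsto hfreq2 hslope'

/-- At an interior minimum, each pure second directional derivative is
nonnegative. -/
lemma aux_lapl_term_nonneg {n : ℕ} {f : EuclideanSpace ℝ (Fin n) → ℝ}
    {x : EuclideanSpace ℝ (Fin n)} {U : Set (EuclideanSpace ℝ (Fin n))}
    (hU : IsOpen U) (hxU : x ∈ U)
    (hdf : ∀ y ∈ U, DifferentiableAt ℝ f y)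
    (hmin : ∀ y ∈ U, f x ≤ f y) (i : Fin n)
    (hdxx : DifferentiableAt ℝ (fun y => fderiv ℝ f y (EuclideanSpace.single i 1)) x) :
    0 ≤ fderiv ℝ (fun y => fderiv ℝ f y (EuclideanSpace.single i 1)) x
      (EuclideanSpace.single i 1) := by
  set v : EuclideanSpace ℝ (Fin n) := EuclideanSpace.single i 1 with hv
  have hnv : ‖v‖ = 1 := by rw [hv, EuclideanSpace.norm_single]; norm_num
  obtain ⟨ρ, hρ, hball⟩ := Metric.isOpen_iff.mp hU x hxU
  set ℓ : ℝ → EuclideanSpace ℝ (Fin n) := fun s => x + s • v with hℓ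
  have hmem : ∀ s : ℝ, |s| < ρ → ℓ s ∈ U := by
    intro s hs
    apply hball
    rw [Metric.mem_ball, dist_eq_norm]
    simp only [hℓ, add_sub_cancel_left, norm_smul, hnv, mul_one, Real.norm_eq_abs]
    exact hs
  have hℓd : ∀ s : ℝ, HasDerivAt ℓ v s := by
    intro s
    have : HasDerivAt (fun s : ℝ => s • v) ((1 : ℝ) • v) s := (hasDerivAt_id s).smul_const v
    simpa [hℓ] using this.const_add x
  set g : ℝ → ℝ := fun s => f (ℓ s) with hg
  have hgd : ∀ s : ℝ, |s| < ρ → HasDerivAt g (fderiv ℝ f (ℓ s) v) s := by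
    intro s hs
    exact ((hdf _ (hmem s hs)).hasFDerivAt).comp_hasDerivAt s (hℓd s)
  have hsmall : ∀ᶠ s in nhds (0 : ℝ), |s| < ρ := by
    have : Metric.ball (0 : ℝ) ρ ∈ nhds (0 : ℝ) := Metric.ball_mem_nhds _ hρ
    filter_upwards [this] with s hs
    simpa [Real.dist_eq] using hs
  have hdg_eq : deriv g =ᶠ[nhds (0 : ℝ)] fun s => fderiv ℝ f (ℓ s) v := by
    filter_upwards [hsmall] with s hs
    exact (hgd s hs).deriv
  have hcomp : HasDerivAt (fun s => fderiv ℝ f (ℓ s) v)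
      (fderiv ℝ (fun y => fderiv ℝ f y v) x v) 0 := by
    have h0 : ℓ 0 = x := by simp [hℓ]
    have hdxx' : HasFDerivAt (fun y => fderiv ℝ f y v)
        (fderiv ℝ (fun y => fderiv ℝ f y v) x) (ℓ 0) := h0 ▸ hdxx.hasFDerivAt
    exact h0 ▸ hdxx'.comp_hasDerivAt 0 (hℓd 0)
  have hLd : HasDerivAt (deriv g) (fderiv ℝ (fun y => fderiv ℝ f y v) x v) 0 :=
    hcomp.congr_of_eventuallyEq hdg_eq
  have hlm : IsLocalMin g 0 := by
    filter_upwards [hsmall] with s hs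
    have : g 0 = f x := by simp [hg, hℓ]
    rw [this]
    exact hmin _ (hmem s hs)
  exact aux_secondDeriv_nonneg hlm
    (by filter_upwards [hsmall] with s hs; exact (hgd s hs).differentiableAt) hLd

/-- If the initial datum dominates ε on Ω, then the solution stays ≥ ε for all
positive times. -/
theorem stmt_0 {n : ℕ} (hn : 1 ≤ n) {Ω : Set (EuclideanSpace ℝ (Fin n))}
    (hΩo : IsOpen Ω) (hΩb : Bornology.IsBounded Ω) {ε : ℝ} (hε : 0 < ε)
    {u : EuclideanSpace ℝ (Fin n) → ℝ → ℝ} (hu : IsRegSol n Ω ε u)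
    (h0 : ∀ x ∈ Ω, ε ≤ u x 0) :
    ∀ x ∈ Ω, ∀ t : ℝ, 0 < t → ε ≤ u x t := by
  -- extend the initial bound to the closure
  have h0' : ∀ x ∈ closure Ω, ε ≤ u x 0 := by
    intro x hx
    have hc0 : ContinuousOn (fun y => u y 0) (closure Ω) :=
      hu.cont.comp (Continuous.continuousOn (by continuity))
        (fun y hy => mk_mem_prod hy (self_mem_Ici (a := (0 : ℝ))))
    have hne : (𝓝[Ω] x).NeBot := mem_closure_iff_nhdsWithin_neBot.mp hx
    have htd : Tendsto (fun y => u y 0) (𝓝[Ω] x) (𝓝 (u x 0)) :=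
      (hc0 x hx).mono_left (nhdsWithin_mono x subset_closure)
    exact ge_of_tendsto htd (eventually_mem_nhdsWithin.mono h0)
  intro x₀ hx₀ t₀ ht₀
  have key : ∀ δ : ℝ, 0 < δ → ε ≤ u x₀ t₀ + δ * t₀ := by
    intro δ hδ
    set K : Set (EuclideanSpace ℝ (Fin n) × ℝ) := closure Ω ×ˢ Icc 0 t₀ with hK
    have hKc : IsCompact K :=
      (Metric.isCompact_of_isClosed_isBounded isClosed_closure hΩb.closure).prod
        isCompact_Icc
    have hx₀K : (x₀, t₀) ∈ K := mk_mem_prod (subset_closure hx₀) ⟨ht₀.le, le_refl t₀⟩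
    have hKne : K.Nonempty := ⟨_, hx₀K⟩
    set w : EuclideanSpace ℝ (Fin n) × ℝ → ℝ := fun p => u p.1 p.2 + δ * p.2 with hw
    have hKsub : K ⊆ closure Ω ×ˢ Ici (0 : ℝ) :=
      prod_mono subset_rfl Icc_subset_Ici_self
    have hwc : ContinuousOn w K :=
      (hu.cont.mono hKsub).add ((continuous_const.mul continuous_snd).continuousOn)
    obtain ⟨p, hpK, hpmin⟩ := hKc.exists_isMinOn hKne hwc
    have hpmin' : ∀ q ∈ K, w p ≤ w q := fun q hq => hpmin hq
    obtain ⟨xs, ts⟩ := p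
    have hxs : xs ∈ closure Ω := hpK.1
    have hts : ts ∈ Icc 0 t₀ := hpK.2
    -- it suffices to show ε ≤ w (xs, ts)
    suffices hεw : ε ≤ w (xs, ts) by
      have := hpmin' _ hx₀K
      simp only [hw] at this hεw
      linarith
    rcases eq_or_lt_of_le hts.1 with hts0 | htsp
    · -- ts = 0
      have : w (xs, ts) = u xs 0 := by simp [hw, ← hts0]
      rw [this]
      exact h0' xs hxs
    · -- ts > 0
      have hxs' : xs ∈ Ω ∪ frontier Ω := by
        have := closure_eq_interior_union_frontier Ω
        rw [hΩo.interior_eq] at this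
        rw [← this]; exact hxs
      rcases hxs' with hxsΩ | hxsF
      · -- interior minimum: contradiction
        exfalso
        set f : EuclideanSpace ℝ (Fin n) → ℝ := fun y => u y ts with hf
        -- spatial minimum
        have hfmin : ∀ y ∈ Ω, f xs ≤ f y := by
          intro y hy
          have := hpmin' (y, ts) (mk_mem_prod (subset_closure hy) hts)
          simp only [hw] at this
          linarith
        have hlap : 0 ≤ lapl f xs := by
          rw [lapl]
          refine Finset.sum_nonneg fun i _ => ?_
          exact aux_lapl_term_nonneg hΩo hxsΩ
            (fun y hy => hu.diff_x y (subset_closure hy) ts htsp) hfmin i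
            (hu.diff_xx xs hxs ts htsp i)
        have hcnn : 0 ≤ min (1 / ε) (∫ y in Ω, ‖gradient (fun z => u z ts) y‖ ^ 2) := by
          refine le_min (by positivity) ?_
          exact integral_nonneg fun y => by positivity
        have hupos : 0 < u xs ts := hu.pos xs hxs ts htsp
        have hd_nonneg : 0 ≤ deriv (u xs) ts := by
          rw [hu.eqn xs hxsΩ ts htsp]
          exact add_nonneg (mul_nonneg hupos.le hlap) (mul_nonneg hupos.le hcnn)
        -- time derivative at the minimum is ≤ -δ
        have hψd : HasDerivAt (fun t => u xs t + δ * t) (deriv (u xs) ts + δ) ts := by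
          have h1 : HasDerivAt (u xs) (deriv (u xs) ts) ts :=
            (hu.diff_t xs hxs ts htsp).hasDerivAt
          have h2 : HasDerivAt (fun t : ℝ => δ * t) δ ts := by
            simpa using (hasDerivAt_id ts).const_mul δ
          exact h1.add h2
        have hsl : Tendsto (slope (fun t => u xs t + δ * t) ts) (𝓝[<] ts)
            (𝓝 (deriv (u xs) ts + δ)) :=
          (hasDerivAt_iff_tendsto_slope.mp hψd).mono_left
            (nhdsWithin_mono ts fun t ht => ne_of_lt ht)
        have hev : ∀ᶠ t in 𝓝[<] ts, slope (fun t => u xs t + δ * t) ts t ≤ 0 := by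
          filter_upwards [Ioo_mem_nhdsLT_of_mem (show ts ∈ Ioc (0 : ℝ) ts from ⟨htsp, le_refl ts⟩)]
            with t ht
          have htK : (xs, t) ∈ K := mk_mem_prod hxs ⟨ht.1.le, ht.2.le.trans hts.2⟩
          have hmono := hpmin' (xs, t) htK
          simp only [hw] at hmono
          rw [slope_def_field]
          apply div_nonpos_of_nonneg_of_nonpos
          · linarith
          · linarith [ht.2]
        have : deriv (u xs) ts + δ ≤ 0 := le_of_tendsto hsl hev
        linarith
      · -- boundary point
        have : w (xs, ts) = ε + δ * ts := by
          simp only [hw]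
          rw [hu.bdry xs hxsF ts htsp]
        rw [this]
        nlinarith
  by_contra hcon
  push_neg at hcon
  have hδ : 0 < (ε - u x₀ t₀) / (2 * t₀) := div_pos (by linarith) (by linarith)
  have := key _ hδ
  have : (ε - u x₀ t₀) / (2 * t₀) * t₀ = (ε - u x₀ t₀) / 2 := by
    field_simp
  nlinarith [key _ hδ]
end

section
/- Let Ω′ be an open set with cl(Ω′) ⊂ Ω, let φ : cl(Ω′) → ℝ be continuous on cl(Ω′) and twice continuously differentiable on Ω′ with −Δφ = 1 on Ω′ and φ = 0 on ∂Ω′, and let c > 0. Let u be a classical solution of the regularized problem with boundary value ε on Ω × (0,∞) satisfying u ≥ ε on cl(Ω) × (0,∞) and u(x,0) ≥ c·φ(x) for all x ∈ Ω′. Then u(x,t) ≥ (c/(1+ct))·φ(x) for all x ∈ Ω′ and all t > 0. -/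
/-!
The barrier `w = c φ / (1 + c t)` satisfies `∂ₜw = w Δw` in `Ω'`, since `Δφ = -1`, while `u`
satisfies `∂ₜu ≥ u Δu` because the nonlocal term is nonnegative. To compare them, perturb `w`
to the strict subsolution `w - δ (1 + t)` and look at the first time `u` touches it on
`closure Ω'`. The touching cannot happen at `t = 0` (by the initial inequality), nor on `∂Ω'`
(where `w = 0 < u`). At an interior touching point, `u - w` has a spatial minimum, so
`Δu ≥ Δw`, and `∂ₜ(u - w + δ (1 + t)) ≤ 0` since no earlier touching occurred. As `u ≤ w` there,
these combine to `δ ≤ 0`. Finally let `δ → 0`.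
-/

open MeasureTheory Set

open Filter Topology

section Calculus

variable {E : Type*} [NormedAddCommGroup E] [NormedSpace ℝ E]

theorem IsLocalMin.eventually_eq_of_isLocalMax {α β : Type*} [TopologicalSpace α]
    [PartialOrder β] {f : α → β} {a : α} (hmin : IsLocalMin f a) (hmax : IsLocalMax f a) :
    f =ᶠ[𝓝 a] fun _ => f a := by
  filter_upwards [hmin, hmax] with s h₁ h₂ using le_antisymm h₂ h₁

theorem IsLocalMin.deriv_deriv_nonneg {f : ℝ → ℝ} {a : ℝ} (h : IsLocalMin f a)
    (hc : ContinuousAt f a) : 0 ≤ deriv (deriv f) a := by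
  by_contra! hneg
  have hconst := h.eventually_eq_of_isLocalMax
    (isLocalMax_of_deriv_deriv_neg hneg h.deriv_eq_zero hc)
  exact hneg.ne (by rw [hconst.deriv.deriv_eq]; simp)

theorem IsLocalMin.hasFDerivAt_fderiv_apply_nonneg {F : E → ℝ} {x e : E} {F'' : E →L[ℝ] ℝ}
    (hmin : IsLocalMin F x) (hF : ∀ᶠ y in 𝓝 x, DifferentiableAt ℝ F y)
    (hF' : HasFDerivAt (fun y => fderiv ℝ F y e) F'' x) : 0 ≤ F'' e := by
  set L : ℝ → E := fun s => x + s • e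
  have hL : ∀ s, HasDerivAt L e s := fun s =>
    (((hasDerivAt_id s).smul_const e).const_add x).congr_deriv (one_smul ℝ e)
  have hL0 : L 0 = x := by simp [L]
  have hLc : Tendsto L (𝓝 0) (𝓝 x) := hL0 ▸ (hL 0).continuousAt.tendsto
  have hderiv : deriv (F ∘ L) =ᶠ[𝓝 0] fun s => fderiv ℝ F (L s) e := by
    filter_upwards [hLc.eventually hF] with s hs
    exact (hs.hasFDerivAt.comp_hasDerivAt s (hL s)).deriv
  have hk : HasDerivAt (fun s => fderiv ℝ F (L s) e) (F'' e) 0 := by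
    rw [← hL0] at hF'
    exact hF'.comp_hasDerivAt 0 (hL 0)
  have hmin' : IsLocalMin (F ∘ L) 0 := (hL0 ▸ hmin).comp_continuous (hL 0).continuousAt
  have hc : ContinuousAt (F ∘ L) 0 :=
    (hF.self_of_nhds.continuousAt.comp_of_eq (hL 0).continuousAt hL0)
  rw [← hk.deriv, ← hderiv.deriv_eq]
  exact hmin'.deriv_deriv_nonneg hc

theorem HasFDerivAt.fderiv_sub_const_mul_apply {f g : E → ℝ} {x e : E} {f'' g'' : E →L[ℝ] ℝ}
    (a : ℝ) (hf : ∀ᶠ y in 𝓝 x, DifferentiableAt ℝ f y) (hg : ∀ᶠ y in 𝓝 x, DifferentiableAt ℝ g y)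
    (hf' : HasFDerivAt (fun y => fderiv ℝ f y e) f'' x)
    (hg' : HasFDerivAt (fun y => fderiv ℝ g y e) g'' x) :
    HasFDerivAt (fun y => fderiv ℝ (fun z => f z - a * g z) y e) (f'' - a • g'') x := by
  refine (hf'.sub (hg'.const_mul a)).congr_of_eventuallyEq ?_
  filter_upwards [hf, hg] with y hfy hgy
  rw [fderiv_fun_sub hfy (hgy.const_mul a), fderiv_const_mul hgy]
  simp

theorem HasDerivAt.nonpos_of_isLocalMinOn_Iic {f : ℝ → ℝ} {f' a : ℝ} (hf : HasDerivAt f f' a)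
    (h : IsLocalMinOn f (Iic a) a) : f' ≤ 0 := by
  have hseg : segment ℝ a (a + -1) ⊆ Iic a := by
    rw [segment_eq_Icc']
    exact fun s hs => hs.2.trans (by simp)
  simpa using h.hasFDerivWithinAt_nonneg hf.hasDerivWithinAt.hasFDerivWithinAt
    (mem_posTangentConeAt_of_segment_subset hseg)

end Calculus

theorem lapl_le_of_isLocalMin_sub {n : ℕ} {f g : EuclideanSpace ℝ (Fin n) → ℝ}
    {x : EuclideanSpace ℝ (Fin n)} {a : ℝ} (hmin : IsLocalMin (fun y => f y - a * g y) x)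
    (hf : ∀ᶠ y in 𝓝 x, DifferentiableAt ℝ f y) (hg : ∀ᶠ y in 𝓝 x, DifferentiableAt ℝ g y)
    (hf₂ : ∀ i, DifferentiableAt ℝ (fun y => fderiv ℝ f y (EuclideanSpace.single i 1)) x)
    (hg₂ : ∀ i, DifferentiableAt ℝ (fun y => fderiv ℝ g y (EuclideanSpace.single i 1)) x) :
    a * lapl g x ≤ lapl f x := by
  have hdiff : ∀ᶠ y in 𝓝 x, DifferentiableAt ℝ (fun z => f z - a * g z) y := by
    filter_upwards [hf, hg] with y hfy hgy using hfy.sub (hgy.const_mul a)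
  rw [lapl, lapl, Finset.mul_sum, ← sub_nonneg, ← Finset.sum_sub_distrib]
  refine Finset.sum_nonneg fun i _ => ?_
  simpa using hmin.hasFDerivAt_fderiv_apply_nonneg hdiff
    ((hf₂ i).hasFDerivAt.fderiv_sub_const_mul_apply a hf hg (hg₂ i).hasFDerivAt)

section FirstTouch

variable {X : Type*} [TopologicalSpace X] [T2Space X] {v : X → ℝ → ℝ} {T : ℝ} {x₁ : X}

theorem exists_first_nonpos_time {K : Set X} (hK : IsCompact K)
    (hv : ContinuousOn (fun p : X × ℝ => v p.1 p.2) (K ×ˢ Icc 0 T)) (hx₁ : x₁ ∈ K)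
    (hT : 0 ≤ T) (hneg : v x₁ T ≤ 0) :
    ∃ t₀ ∈ Icc 0 T, (∃ x ∈ K, v x t₀ ≤ 0) ∧ ∀ x ∈ K, ∀ t ∈ Ico 0 t₀, 0 < v x t := by
  set M := (K ×ˢ Icc 0 T) ∩ (fun p : X × ℝ => v p.1 p.2) ⁻¹' Iic 0
  have hMc : IsCompact M := (hK.prod isCompact_Icc).of_isClosed_subset
    (hv.preimage_isClosed_of_isClosed (hK.isClosed.prod isClosed_Icc) isClosed_Iic)
    inter_subset_left
  obtain ⟨⟨x, t₀⟩, ⟨⟨hx, ht₀⟩, hvx⟩, hfirst⟩ :=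
    hMc.exists_isMinOn ⟨(x₁, T), ⟨hx₁, hT, le_rfl⟩, hneg⟩ continuous_snd.continuousOn
  refine ⟨t₀, ht₀, ⟨x, hx, hvx⟩, fun y hy t ht => ?_⟩
  by_contra! hle
  exact ht.2.not_ge (isMinOn_iff.1 hfirst (y, t) ⟨⟨hy, ht.1, ht.2.le.trans ht₀.2⟩, hle⟩)

theorem exists_first_touch {U : Set X} (hU : IsOpen U) (hK : IsCompact (closure U))
    (hv : ContinuousOn (fun p : X × ℝ => v p.1 p.2) (closure U ×ˢ Icc 0 T))
    (hinit : ∀ x ∈ closure U, 0 < v x 0) (hbdry : ∀ x ∈ frontier U, ∀ t ∈ Ioc 0 T, 0 < v x t)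
    (hx₁ : x₁ ∈ closure U) (hT : 0 ≤ T) (hneg : v x₁ T ≤ 0) :
    ∃ x₀ ∈ U, ∃ t₀, 0 < t₀ ∧ v x₀ t₀ ≤ 0 ∧ IsLocalMin (v · t₀) x₀ ∧
      IsLocalMinOn (v x₀) (Iic t₀) t₀ := by
  obtain ⟨t₀, ht₀, ⟨x, hx, hvx⟩, hpos⟩ := exists_first_nonpos_time hK hv hx₁ hT hneg
  have ht₀pos : 0 < t₀ := ht₀.1.lt_of_ne fun h => (hinit x hx).not_ge (h ▸ hvx)
  obtain ⟨x₀, hx₀, hmin⟩ := hK.exists_isMinOn ⟨x, hx⟩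
    (hv.comp (continuous_id.prodMk continuous_const).continuousOn fun y hy => ⟨hy, ht₀⟩)
  have hv₀ : v x₀ t₀ ≤ 0 := (hmin hx).trans hvx
  have hx₀U : x₀ ∈ U := by
    by_contra h
    exact (hbdry x₀ ⟨hx₀, by rwa [hU.interior_eq]⟩ t₀ ⟨ht₀pos, ht₀.2⟩).not_ge hv₀
  refine ⟨x₀, hx₀U, t₀, ht₀pos, hv₀, (hmin.on_subset subset_closure).isLocalMin
    (hU.mem_nhds hx₀U), ?_⟩
  filter_upwards [Ioc_mem_nhdsLE ht₀pos] with s hs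
  rcases hs.2.eq_or_lt with rfl | hlt
  · exact le_rfl
  · exact hv₀.trans (hpos x₀ hx₀ s ⟨hs.1.le, hlt⟩).le

end FirstTouch

section RegSol

variable {n : ℕ} {Ω : Set (EuclideanSpace ℝ (Fin n))} {ε : ℝ}
  {u : EuclideanSpace ℝ (Fin n) → ℝ → ℝ}

theorem IsRegSol.mul_lapl_le_deriv (hu : IsRegSol n Ω ε u) (hε : 0 ≤ ε)
    {x : EuclideanSpace ℝ (Fin n)} (hx : x ∈ Ω) {t : ℝ} (ht : 0 < t) :
    u x t * lapl (fun y => u y t) x ≤ deriv (u x) t := by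
  have := mul_nonneg (hu.pos x (subset_closure hx) t ht).le
    (le_min (by positivity) (integral_nonneg fun y => by positivity) :
      0 ≤ min (1 / ε) (∫ y in Ω, ‖gradient (fun z => u z t) y‖ ^ 2))
  rw [hu.eqn x hx t ht]
  linarith

theorem IsRegSol.neg_mul_le_deriv_of_isLocalMin (hu : IsRegSol n Ω ε u) (hε : 0 ≤ ε)
    {φ : EuclideanSpace ℝ (Fin n) → ℝ} {x : EuclideanSpace ℝ (Fin n)} {t a : ℝ}
    (hx : Ω ∈ 𝓝 x) (ht : 0 < t) (hφ : ContDiffAt ℝ 2 φ x) (hφx : lapl φ x = -1)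
    (hmin : IsLocalMin (fun y => u y t - a * φ y) x) :
    -a * u x t ≤ deriv (u x) t := by
  have hcl : closure Ω ∈ 𝓝 x := mem_of_superset hx subset_closure
  have hlap : -a ≤ lapl (fun y => u y t) x := by
    have := lapl_le_of_isLocalMin_sub hmin
      (by filter_upwards [hcl] with y hy using hu.diff_x y hy t ht)
      (by filter_upwards [hφ.eventually (by simp)] with y hy using hy.differentiableAt (by simp))
      (hu.diff_xx x (mem_of_mem_nhds hcl) t ht)
      (fun i => ((hφ.fderiv_right (m := 1) le_rfl).differentiableAt one_ne_zero).clm_apply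
        (differentiableAt_const _))
    rwa [hφx, mul_neg_one] at this
  have := hu.mul_lapl_le_deriv hε (mem_of_mem_nhds hx) ht
  nlinarith [hu.pos x (mem_of_mem_nhds hcl) t ht]

end RegSol

section Barrier

/-- `u - (w - δ (1 + t))` for the barrier `w = c φ / (1 + c t)`; the term `δ (1 + t)` makes
`w - δ (1 + t)` a strict subsolution. -/
noncomputable def barrierGap {X : Type*} (u : X → ℝ → ℝ) (φ : X → ℝ) (c δ : ℝ) (x : X)
    (t : ℝ) : ℝ :=
  u x t - c / (1 + c * t) * φ x + δ * (1 + t)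

variable {X : Type*} {u : X → ℝ → ℝ} {φ : X → ℝ} {c δ : ℝ}

theorem continuousOn_barrierGap [TopologicalSpace X] {s : Set X}
    (hu : ContinuousOn (fun p : X × ℝ => u p.1 p.2) (s ×ˢ Ici 0)) (hφ : ContinuousOn φ s)
    (hc : 0 ≤ c) :
    ContinuousOn (fun p : X × ℝ => barrierGap u φ c δ p.1 p.2) (s ×ˢ Ici 0) := by
  refine (hu.sub (ContinuousOn.mul ?_ (hφ.comp continuousOn_fst fun p hp => hp.1))).add
    (by fun_prop)
  exact continuousOn_const.div (by fun_prop) fun p hp => by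
    have : 0 ≤ p.2 := hp.2
    positivity

theorem hasDerivAt_barrierGap {x : X} {t : ℝ} (hu : DifferentiableAt ℝ (u x) t)
    (ht : 1 + c * t ≠ 0) :
    HasDerivAt (barrierGap u φ c δ x) (deriv (u x) t + (c / (1 + c * t)) ^ 2 * φ x + δ) t := by
  have hden : HasDerivAt (fun s => 1 + c * s) c t := by
    simpa using ((hasDerivAt_id t).const_mul c).const_add 1
  have hw : HasDerivAt (fun s => c / (1 + c * s)) (-(c / (1 + c * t)) ^ 2) t :=
    ((hasDerivAt_const t c).div hden ht).congr_deriv (by field_simp; ring)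
  exact ((hu.hasDerivAt.sub (hw.mul_const (φ x))).add
    (((hasDerivAt_id t).const_add 1).const_mul δ)).congr_deriv (by ring)

end Barrier

section Comparison

variable {n : ℕ} {Ω Ω' : Set (EuclideanSpace ℝ (Fin n))} {ε c δ : ℝ}
  {u : EuclideanSpace ℝ (Fin n) → ℝ → ℝ} {φ : EuclideanSpace ℝ (Fin n) → ℝ}

theorem IsRegSol.barrierGap_pos_of_isLocalMin (hu : IsRegSol n Ω ε u) (hε : 0 ≤ ε)
    (hc : 0 ≤ c) (hδ : 0 < δ) {x : EuclideanSpace ℝ (Fin n)} {t : ℝ} (hx : Ω ∈ 𝓝 x)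
    (ht : 0 < t) (hφ : ContDiffAt ℝ 2 φ x) (hφx : lapl φ x = -1)
    (hmin : IsLocalMin (barrierGap u φ c δ · t) x)
    (hfirst : IsLocalMinOn (barrierGap u φ c δ x) (Iic t) t) :
    0 < barrierGap u φ c δ x t := by
  set a := c / (1 + c * t)
  have ha : 0 ≤ a := by positivity
  have hut : -a * u x t ≤ deriv (u x) t :=
    hu.neg_mul_le_deriv_of_isLocalMin hε hx ht hφ hφx
      (hmin.mono fun y hy => by simp only [barrierGap] at hy; linarith)
  have hvt : deriv (u x) t + a ^ 2 * φ x + δ ≤ 0 :=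
    (hasDerivAt_barrierGap (hu.diff_t x (subset_closure (mem_of_mem_nhds hx)) t ht)
      (by positivity)).nonpos_of_isLocalMinOn_Iic hfirst
  by_contra! hle
  have hgap : 0 ≤ a * φ x - u x t := by
    simp only [barrierGap] at hle
    nlinarith
  nlinarith [mul_nonneg ha hgap]

theorem IsRegSol.barrierGap_pos (hu : IsRegSol n Ω ε u) (hε : 0 ≤ ε)
    (hΩb : Bornology.IsBounded Ω) (hΩ'o : IsOpen Ω') (hsub : closure Ω' ⊆ Ω)
    (hφc : ContinuousOn φ (closure Ω')) (hφ2 : ContDiffOn ℝ 2 φ Ω')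
    (hφeq : ∀ x ∈ Ω', lapl φ x = -1) (hφ0 : ∀ x ∈ frontier Ω', φ x = 0) (hc : 0 ≤ c)
    (h0 : ∀ x ∈ Ω', c * φ x ≤ u x 0) (hδ : 0 < δ) {T : ℝ} (hT : 0 ≤ T) :
    ∀ x ∈ closure Ω', 0 < barrierGap u φ c δ x T := by
  have hsub' : closure Ω' ⊆ closure Ω := hsub.trans subset_closure
  have hu₀ : ContinuousOn (fun x => u x 0) (closure Ω') :=
    hu.cont.comp (continuous_id.prodMk continuous_const).continuousOn
      fun x hx => ⟨hsub' hx, le_refl (0 : ℝ)⟩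
  have hinit : ∀ x ∈ closure Ω', 0 < barrierGap u φ c δ x 0 := fun x hx => by
    have := le_on_closure h0 (continuousOn_const.mul hφc) hu₀ hx
    simp only [barrierGap, mul_zero, add_zero, div_one, mul_one]
    linarith
  have hbdry : ∀ x ∈ frontier Ω', ∀ t ∈ Ioc 0 T, 0 < barrierGap u φ c δ x t := by
    intro x hx t ht
    have := hu.pos x (hsub' (frontier_subset_closure hx)) t ht.1
    simp only [barrierGap, hφ0 x hx, mul_zero, sub_zero]
    nlinarith [mul_pos hδ (by linarith [ht.1] : (0 : ℝ) < 1 + t)]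
  intro x₁ hx₁
  by_contra! hneg
  obtain ⟨x, hx, t, ht, hle, hmin, hfirst⟩ := exists_first_touch hΩ'o
    (Metric.isCompact_of_isClosed_isBounded isClosed_closure (hΩb.subset hsub))
    ((continuousOn_barrierGap (hu.cont.mono (prod_mono hsub' subset_rfl)) hφc hc).mono
      (prod_mono subset_rfl Icc_subset_Ici_self)) hinit hbdry hx₁ hT hneg
  have hxΩ : Ω ∈ 𝓝 x := mem_of_superset (hΩ'o.mem_nhds hx) (subset_closure.trans hsub)
  exact hle.not_gt (hu.barrierGap_pos_of_isLocalMin hε hc hδ hxΩ ht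
    (hφ2.contDiffAt (hΩ'o.mem_nhds hx)) (hφeq x hx) hmin hfirst)

end Comparison

theorem stmt_7_general {n : ℕ} {Ω : Set (EuclideanSpace ℝ (Fin n))}
    (hΩb : Bornology.IsBounded Ω)
    {Ω' : Set (EuclideanSpace ℝ (Fin n))} (hΩ'o : IsOpen Ω')
    (hsub : closure Ω' ⊆ Ω)
    {φ : EuclideanSpace ℝ (Fin n) → ℝ} (hφc : ContinuousOn φ (closure Ω'))
    (hφ2 : ContDiffOn ℝ 2 φ Ω') (hφeq : ∀ x ∈ Ω', lapl φ x = -1)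
    (hφ0 : ∀ x ∈ frontier Ω', φ x = 0)
    {c : ℝ} (hc : 0 < c) {ε : ℝ} (hε : 0 < ε)
    {u : EuclideanSpace ℝ (Fin n) → ℝ → ℝ} (hu : IsRegSol n Ω ε u)
    (h0 : ∀ x ∈ Ω', c * φ x ≤ u x 0) :
    ∀ x ∈ Ω', ∀ t : ℝ, 0 < t → (c / (1 + c * t)) * φ x ≤ u x t := by
  intro x hx t ht
  refine le_of_forall_pos_lt_add fun η hη => ?_
  have hgap := hu.barrierGap_pos hε.le hΩb hΩ'o hsub hφc hφ2 hφeq hφ0 hc.le h0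
    (δ := η / (1 + t)) (by positivity) ht.le x (subset_closure hx)
  rw [barrierGap, div_mul_cancel₀ _ (by positivity)] at hgap
  linarith

/-- Comparison from below with the subsolution (c/(1+ct))·φ on a compactly
contained subdomain Ω′, where −Δφ = 1 in Ω′ and φ = 0 on ∂Ω′. -/
theorem stmt_7 {n : ℕ} (hn : 1 ≤ n) {Ω : Set (EuclideanSpace ℝ (Fin n))}
    (hΩo : IsOpen Ω) (hΩb : Bornology.IsBounded Ω)
    {Ω' : Set (EuclideanSpace ℝ (Fin n))} (hΩ'o : IsOpen Ω')
    (hsub : closure Ω' ⊆ Ω)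
    {φ : EuclideanSpace ℝ (Fin n) → ℝ} (hφc : ContinuousOn φ (closure Ω'))
    (hφ2 : ContDiffOn ℝ 2 φ Ω') (hφeq : ∀ x ∈ Ω', lapl φ x = -1)
    (hφ0 : ∀ x ∈ frontier Ω', φ x = 0)
    {c : ℝ} (hc : 0 < c) {ε : ℝ} (hε : 0 < ε)
    {u : EuclideanSpace ℝ (Fin n) → ℝ → ℝ} (hu : IsRegSol n Ω ε u)
    (hge : ∀ x ∈ closure Ω, ∀ t : ℝ, 0 < t → ε ≤ u x t)
    (h0 : ∀ x ∈ Ω', c * φ x ≤ u x 0) :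
    ∀ x ∈ Ω', ∀ t : ℝ, 0 < t → (c / (1 + c * t)) * φ x ≤ u x t :=
  stmt_7_general hΩb hΩ'o hsub hφc hφ2 hφeq hφ0 hc hε hu h0
end

section
/- If w₀ ∈ M minimizes the functional v ↦ ‖v‖² over M (i.e. ‖w₀‖² ≤ ‖v‖² for all v ∈ M), then ⟨w₀, φ⟩ = ‖w₀‖² · L(φ) for every φ ∈ H. -/
open RealInnerProductSpace

/-! A minimizer `w₀` of the norm on the hyperplane `L = 1` is at distance `‖w₀‖` from the
subspace `ker L`, with `0` as a nearest point, so by the orthogonality characterization of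
nearest points `w₀ ⊥ ker L`. Since `φ - L φ • w₀ ∈ ker L` for every `φ`, this is the identity. -/

theorem real_inner_eq_zero_of_forall_norm_le_norm_sub {F : Type*} [NormedAddCommGroup F]
    [InnerProductSpace ℝ F] (K : Submodule ℝ F) {u : F} (h : ∀ w ∈ K, ‖u‖ ≤ ‖u - w‖)
    {w : F} (hw : w ∈ K) : ⟪u, w⟫ = 0 := by
  have hnearest : ‖u - 0‖ = ⨅ w : (K : Set F), ‖u - w‖ :=
    le_antisymm (le_ciInf fun w ↦ by simpa using h w w.2)
      (ciInf_le ⟨0, Set.forall_mem_range.2 fun _ ↦ norm_nonneg _⟩ (⟨0, K.zero_mem⟩ : K))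
  simpa using (K.norm_eq_iInf_iff_real_inner_eq_zero K.zero_mem).1 hnearest w hw

theorem norm_le_norm_sub_of_map_eq_zero {F : Type*} [NormedAddCommGroup F] [Module ℝ F]
    (L : F →L[ℝ] ℝ) {w₀ : F} (hw₀ : L w₀ = 1) (hmin : ∀ v : F, L v = 1 → ‖w₀‖ ^ 2 ≤ ‖v‖ ^ 2)
    {w : F} (hw : L w = 0) : ‖w₀‖ ≤ ‖w₀ - w‖ :=
  (pow_le_pow_iff_left₀ (norm_nonneg _) (norm_nonneg _) two_ne_zero).1 <|
    hmin _ (by rw [map_sub, hw₀, hw, sub_zero])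

theorem stmt_11_general {H : Type*} [NormedAddCommGroup H] [InnerProductSpace ℝ H]
    (L : H →L[ℝ] ℝ)
    {w₀ : H} (hw₀ : L w₀ = 1)
    (hmin : ∀ v : H, L v = 1 → ‖w₀‖ ^ 2 ≤ ‖v‖ ^ 2) :
    ∀ φ : H, ⟪w₀, φ⟫ = ‖w₀‖ ^ 2 * L φ := by
  intro φ
  have horth : ⟪w₀, φ - L φ • w₀⟫ = 0 :=
    real_inner_eq_zero_of_forall_norm_le_norm_sub (LinearMap.ker (L : H →ₗ[ℝ] ℝ))
      (fun w hw ↦ norm_le_norm_sub_of_map_eq_zero L hw₀ hmin hw) (by simp [hw₀])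
  rw [inner_sub_right, real_inner_smul_right, real_inner_self_eq_norm_sq] at horth
  linarith

/-- Euler–Lagrange identity: a minimizer w₀ of v ↦ ‖v‖² over M = {v : L v = 1}
satisfies ⟪w₀, φ⟫ = ‖w₀‖² · L φ for all φ. -/
theorem stmt_11 {H : Type*} [NormedAddCommGroup H] [InnerProductSpace ℝ H]
    [CompleteSpace H] (L : H →L[ℝ] ℝ) (hL : L ≠ 0)
    {w₀ : H} (hw₀ : L w₀ = 1)
    (hmin : ∀ v : H, L v = 1 → ‖w₀‖ ^ 2 ≤ ‖v‖ ^ 2) :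
    ∀ φ : H, ⟪w₀, φ⟫ = ‖w₀‖ ^ 2 * L φ :=
  stmt_11_general L hw₀ hmin
end

section
/- Let N ⊂ (0,∞) be a set of Lebesgue measure zero, and let v : [0,∞) → H be such that the map t ↦ j(v(t)) is continuous from [0,∞) to Y and such that ‖v(t₂)‖ ≤ ‖v(t₁)‖ whenever t₁, t₂ ∈ [0,∞)∖N and t₁ ≤ t₂. Then for every t₁ ∈ [0,∞)∖N and every t₂ ≥ t₁ (with t₂ arbitrary, not necessarily outside N) one has ‖v(t₂)‖ ≤ ‖v(t₁)‖. -/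
/-!
Continuity of `t ↦ j (v t)` only gives `j (v s) → j (v t₂)`, not convergence of `v s` itself. But
for `ψ ∈ Y*` the Riesz representative `w` of `ψ ∘ j` satisfies `⟪w, v s⟫ = ψ (j (v s))`, so
`⟪w, v t₂⟫ ≤ ‖w‖ sup ‖v s‖`. Injectivity of `j` and Hahn–Banach make these `w` dense in `H`, hence
the bound holds for `w = v t₂`, giving `‖v t₂‖ ≤ sup ‖v s‖`. Approximating `t₂` from the right by
times `s ∉ N`, which is possible since a null set has empty interior, gives `‖v t₂‖ ≤ ‖v t₁‖`.
-/

open MeasureTheory Set Filter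
open scoped InnerProductSpace Topology

theorem IsOpen.closure_diff_of_measure_zero {X : Type*} [TopologicalSpace X] [MeasurableSpace X]
    {μ : Measure X} [μ.IsOpenPosMeasure] {s N : Set X} (hs : IsOpen s) (hN : μ N = 0) :
    closure (s \ N) = closure s := by
  have hdense : Dense Nᶜ := interior_eq_empty_iff_dense_compl.1 (μ.interior_eq_empty_of_null hN)
  exact (closure_mono sdiff_subset).antisymm
    (closure_minimal (hdense.open_subset_closure_inter hs) isClosed_closure)

section Hilbert

variable {H : Type*} [NormedAddCommGroup H] [InnerProductSpace ℝ H] [CompleteSpace H]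
  {Y : Type*} [NormedAddCommGroup Y] [NormedSpace ℝ Y]

noncomputable def rieszPullback (j : H →L[ℝ] Y) : StrongDual ℝ Y →ₗ[ℝ] H :=
  (InnerProductSpace.toDual ℝ H).symm.toLinearEquiv.toLinearMap ∘ₗ
    ((ContinuousLinearMap.compL ℝ H Y ℝ).flip j : StrongDual ℝ Y →ₗ[ℝ] StrongDual ℝ H)

theorem inner_rieszPullback (j : H →L[ℝ] Y) (ψ : StrongDual ℝ Y) (x : H) :
    ⟪rieszPullback j ψ, x⟫_ℝ = ψ (j x) := by
  simp [rieszPullback]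

theorem dense_range_rieszPullback {j : H →L[ℝ] Y} (hj : Function.Injective j) :
    Dense (LinearMap.range (rieszPullback j) : Set H) := by
  rw [Submodule.dense_iff_topologicalClosure_eq_top, Submodule.topologicalClosure_eq_top_iff,
    Submodule.eq_bot_iff]
  intro x hx
  have hjx : j x = 0 := SeparatingDual.eq_zero_of_forall_dual_eq_zero fun ψ => by
    rw [← inner_rieszPullback]
    exact hx _ ⟨ψ, rfl⟩
  exact (injective_iff_map_eq_zero j).1 hj x hjx

theorem norm_le_of_tendsto_of_injective {j : H →L[ℝ] Y} (hj : Function.Injective j)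
    {ι : Type*} {l : Filter ι} [l.NeBot] {x : ι → H} {u : H} {C : ℝ}
    (hx : ∀ᶠ i in l, ‖x i‖ ≤ C) (hlim : Tendsto (fun i => j (x i)) l (𝓝 (j u))) :
    ‖u‖ ≤ C := by
  have hC : 0 ≤ C := by
    obtain ⟨i, hi⟩ := hx.exists
    exact (norm_nonneg _).trans hi
  have hrange : ∀ w ∈ LinearMap.range (rieszPullback j), ⟪w, u⟫_ℝ ≤ ‖w‖ * C := by
    rintro _ ⟨ψ, rfl⟩
    have hinner : Tendsto (fun i => ⟪rieszPullback j ψ, x i⟫_ℝ) l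
        (𝓝 ⟪rieszPullback j ψ, u⟫_ℝ) := by
      simp only [inner_rieszPullback]
      exact (ψ.continuous.tendsto _).comp hlim
    refine le_of_tendsto hinner (hx.mono fun i hi => ?_)
    exact (real_inner_le_norm _ _).trans (mul_le_mul_of_nonneg_left hi (norm_nonneg _))
  have hu : ⟪u, u⟫_ℝ ≤ ‖u‖ * C :=
    (dense_range_rieszPullback hj).induction (P := fun w => ⟪w, u⟫_ℝ ≤ ‖w‖ * C) hrange
      (isClosed_le (by fun_prop) (by fun_prop)) u
  rw [real_inner_self_eq_norm_mul_norm] at hu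
  nlinarith [norm_nonneg u]

end Hilbert

theorem stmt_14_general {H : Type*} [NormedAddCommGroup H] [InnerProductSpace ℝ H]
    [CompleteSpace H] {Y : Type*} [NormedAddCommGroup Y] [NormedSpace ℝ Y]
    (j : H →L[ℝ] Y) (hj : Function.Injective j)
    {N : Set ℝ} (hN0 : volume N = 0)
    (v : ℝ → H) (hcont : ContinuousOn (fun t => j (v t)) (Ici 0))
    (hmono : ∀ t₁ ∈ Ici (0 : ℝ) \ N, ∀ t₂ ∈ Ici (0 : ℝ) \ N,
      t₁ ≤ t₂ → ‖v t₂‖ ≤ ‖v t₁‖) :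
    ∀ t₁ ∈ Ici (0 : ℝ) \ N, ∀ t₂ : ℝ, t₁ ≤ t₂ → ‖v t₂‖ ≤ ‖v t₁‖ := by
  intro t₁ ht₁ t₂ h12
  have ht₁0 : 0 ≤ t₁ := ht₁.1
  have hsub : Ioi t₁ \ N ⊆ Ici 0 \ N := fun s hs => ⟨ht₁0.trans hs.1.le, hs.2⟩
  have hclosure : t₂ ∈ closure (Ioi t₁ \ N) := by
    rwa [isOpen_Ioi.closure_diff_of_measure_zero hN0, closure_Ioi]
  have := mem_closure_iff_nhdsWithin_neBot.1 hclosure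
  refine norm_le_of_tendsto_of_injective hj (l := 𝓝[Ioi t₁ \ N] t₂) (x := v) ?_ ?_
  · exact eventually_nhdsWithin_of_forall fun s hs => hmono t₁ ht₁ s (hsub hs) hs.1.le
  · exact (hcont t₂ (ht₁0.trans h12)).tendsto.mono_left
      (nhdsWithin_mono _ (hsub.trans sdiff_subset))

/-- Monotonicity transfer: if t ↦ j(v(t)) is continuous and ‖v(·)‖ is
nonincreasing along times outside a null set N, then ‖v(t₂)‖ ≤ ‖v(t₁)‖ for
every t₁ outside N and every t₂ ≥ t₁. -/
theorem stmt_14 {H : Type*} [NormedAddCommGroup H] [InnerProductSpace ℝ H]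
    [CompleteSpace H] {Y : Type*} [NormedAddCommGroup Y] [NormedSpace ℝ Y]
    (j : H →L[ℝ] Y) (hj : Function.Injective j)
    {N : Set ℝ} (hN : N ⊆ Ioi 0) (hN0 : volume N = 0)
    (v : ℝ → H) (hcont : ContinuousOn (fun t => j (v t)) (Ici 0))
    (hmono : ∀ t₁ ∈ Ici (0 : ℝ) \ N, ∀ t₂ ∈ Ici (0 : ℝ) \ N,
      t₁ ≤ t₂ → ‖v t₂‖ ≤ ‖v t₁‖) :
    ∀ t₁ ∈ Ici (0 : ℝ) \ N, ∀ t₂ : ℝ, t₁ ≤ t₂ → ‖v t₂‖ ≤ ‖v t₁‖ :=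
  stmt_14_general j hj hN0 v hcont hmono
end

section
/- Let Ω ⊂ ℝⁿ (n ≥ 1) be a bounded, open, connected set, and let V be the set of all functions v : cl(Ω) → ℝ that are restrictions to cl(Ω) of continuously differentiable functions on ℝⁿ and vanish on ∂Ω. Let Φ ∈ V be twice continuously differentiable on Ω with ΔΦ = −1 on Ω and Φ not identically zero, and assume the Green identity ∫_Ω ∇v·∇Φ dx = ∫_Ω v dx holds for every v ∈ V. Then ∫_Ω Φ dx = ∫_Ω |∇Φ|² dx > 0, and every v ∈ V with ∫_Ω v dx = 1 satisfies ∫_Ω |∇v|² dx ≥ 1/∫_Ω Φ dx, with equality if and only if v = Φ/∫_Ω Φ dx on cl(Ω). -/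
/-!
Green's identity with `v = Φ` gives `∫ Φ = ∫ ‖∇Φ‖²`. For `v` of unit mass it makes
`∇(v - Φ / ∫ Φ)` orthogonal to `∇Φ` in `L²`, so `∫ ‖∇v‖² = ∫ ‖∇(v - Φ / ∫ Φ)‖² + 1 / ∫ Φ`.
A function in `V` with vanishing Dirichlet integral has zero gradient on the connected set `Ω`,
so it is constant on `cl(Ω)`, and the constant is its boundary value `0`; this gives both
`∫ Φ > 0` (as `Φ ≢ 0`) and the equality case.
-/

open MeasureTheory Set RealInnerProductSpace

/-- Membership in V: restriction to cl(Ω) of a C¹ function on ℝⁿ vanishing on ∂Ω. -/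
def memV {n : ℕ} (Ω : Set (EuclideanSpace ℝ (Fin n)))
    (v : EuclideanSpace ℝ (Fin n) → ℝ) : Prop :=
  ContDiff ℝ 1 v ∧ ∀ x ∈ frontier Ω, v x = 0

theorem Bornology.IsBounded.nonempty_frontier {E : Type*} [NormedAddCommGroup E]
    [NormedSpace ℝ E] [Nontrivial E] {s : Set E} (hb : Bornology.IsBounded s)
    (hs : s.Nonempty) : (frontier s).Nonempty :=
  nonempty_frontier_iff.2 ⟨hs, fun h => NormedSpace.unbounded_univ ℝ E (h ▸ hb)⟩

theorem IsOpen.eqOn_zero_closure_of_fderiv_eq_zero {E F : Type*} [NormedAddCommGroup E]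
    [NormedSpace ℝ E] [Nontrivial E] [NormedAddCommGroup F] [NormedSpace ℝ F]
    {Ω : Set E} {f : E → F} (hΩo : IsOpen Ω) (hΩb : Bornology.IsBounded Ω)
    (hΩc : IsConnected Ω) (hf : Differentiable ℝ f) (hf' : EqOn (fderiv ℝ f) 0 Ω)
    (hfr : EqOn f 0 (frontier Ω)) : EqOn f 0 (closure Ω) := by
  obtain ⟨a, ha⟩ := hΩo.exists_is_const_of_fderiv_eq_zero hΩc.isPreconnected
    hf.differentiableOn hf'
  have hcl : EqOn f (fun _ => a) (closure Ω) :=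
    EqOn.closure ha hf.continuous continuous_const
  obtain ⟨z, hz⟩ := hΩb.nonempty_frontier hΩc.nonempty
  have ha0 : a = 0 := (hcl (frontier_subset_closure hz)).symm.trans (hfr hz)
  exact fun x hx => (hcl hx).trans ha0

theorem IsOpen.eqOn_zero_of_setIntegral_eq_zero {X : Type*} [TopologicalSpace X]
    [MeasurableSpace X] [OpensMeasurableSpace X] {μ : Measure X} [μ.IsOpenPosMeasure]
    {U : Set X} {g : X → ℝ} (hU : IsOpen U) (hg : ContinuousOn g U)
    (hg0 : ∀ x ∈ U, 0 ≤ g x) (hgi : IntegrableOn g U μ) (h : ∫ x in U, g x ∂μ = 0) :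
    EqOn g 0 U :=
  Measure.eqOn_open_of_ae_eq ((setIntegral_eq_zero_iff_of_nonneg_ae
    (ae_restrict_of_forall_mem hU.measurableSet hg0) hgi).1 h) hU hg continuousOn_const

theorem Continuous.integrableOn_of_isBounded {X : Type*} [MetricSpace X] [ProperSpace X]
    [MeasurableSpace X] [OpensMeasurableSpace X] {μ : Measure X}
    [IsFiniteMeasureOnCompacts μ] {E : Type*} [NormedAddCommGroup E] {s : Set X} {f : X → E}
    (hf : Continuous f) (hs : Bornology.IsBounded s) : IntegrableOn f s μ :=
  (hf.continuousOn.integrableOn_compact hs.isCompact_closure).mono_set subset_closure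

section Gradient

variable {F : Type*} [NormedAddCommGroup F] [InnerProductSpace ℝ F] [CompleteSpace F]

theorem ContDiff.continuous_gradient {f : F → ℝ} (hf : ContDiff ℝ 1 f) :
    Continuous (gradient f) :=
  (InnerProductSpace.toDual ℝ F).symm.continuous.comp (hf.continuous_fderiv one_ne_zero)

theorem gradient_eq_zero_iff {f : F → ℝ} {x : F} : gradient f x = 0 ↔ fderiv ℝ f x = 0 :=
  (InnerProductSpace.toDual ℝ F).symm.map_eq_zero_iff

theorem gradient_sub_const_mul {v Φ : F → ℝ} {x : F} (hv : DifferentiableAt ℝ v x)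
    (hΦ : DifferentiableAt ℝ Φ x) (a : ℝ) :
    gradient (fun y => v y - a * Φ y) x = gradient v x - a • gradient Φ x := by
  simp [gradient, fderiv_fun_sub hv (hΦ.const_mul a), fderiv_const_mul hΦ]

end Gradient

section MemV

variable {n : ℕ} {Ω : Set (EuclideanSpace ℝ (Fin n))}

theorem memV.sub_const_mul {v Φ : EuclideanSpace ℝ (Fin n) → ℝ} (hv : memV Ω v)
    (hΦ : memV Ω Φ) (a : ℝ) : memV Ω (fun x => v x - a * Φ x) :=
  ⟨hv.1.sub (contDiff_const.mul hΦ.1), fun x hx => by simp [hv.2 x hx, hΦ.2 x hx]⟩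

theorem memV.integral_norm_gradient_sq_eq_zero_iff (hn : 1 ≤ n) (hΩo : IsOpen Ω)
    (hΩb : Bornology.IsBounded Ω) (hΩc : IsConnected Ω) {f : EuclideanSpace ℝ (Fin n) → ℝ}
    (hf : memV Ω f) :
    ∫ x in Ω, ‖gradient f x‖ ^ 2 = 0 ↔ ∀ x ∈ closure Ω, f x = 0 := by
  have : Nonempty (Fin n) := ⟨⟨0, hn⟩⟩
  constructor
  · intro h
    have hgrad := hΩo.eqOn_zero_of_setIntegral_eq_zero
      (hf.1.continuous_gradient.norm.pow 2).continuousOn (fun x _ => sq_nonneg _)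
      ((hf.1.continuous_gradient.norm.pow 2).integrableOn_of_isBounded hΩb) h
    refine hΩo.eqOn_zero_closure_of_fderiv_eq_zero hΩb hΩc (hf.1.differentiable one_ne_zero)
      (fun x hx => ?_) hf.2
    simpa [gradient_eq_zero_iff] using hgrad hx
  · intro h
    refine setIntegral_eq_zero_of_forall_eq_zero fun x hx => ?_
    have hloc : f =ᶠ[nhds x] fun _ => 0 :=
      Filter.eventuallyEq_of_mem (hΩo.mem_nhds hx) fun y hy => h y (subset_closure hy)
    simp [hloc.gradient_eq]

theorem integral_norm_gradient_sq_eq_add_inv_integral (hΩb : Bornology.IsBounded Ω)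
    {Φ : EuclideanSpace ℝ (Fin n) → ℝ} (hΦ : memV Ω Φ)
    (hGreen : ∀ v : EuclideanSpace ℝ (Fin n) → ℝ, memV Ω v →
      (∫ x in Ω, ⟪gradient v x, gradient Φ x⟫) = ∫ x in Ω, v x)
    {v : EuclideanSpace ℝ (Fin n) → ℝ} (hv : memV Ω v) (hv1 : ∫ x in Ω, v x = 1) :
    ∫ x in Ω, ‖gradient v x‖ ^ 2
      = (∫ x in Ω, ‖gradient (fun y => v y - (∫ x in Ω, Φ x)⁻¹ * Φ y) x‖ ^ 2)
        + (∫ x in Ω, Φ x)⁻¹ := by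
  set c := ∫ x in Ω, Φ x
  set w := fun y => v y - c⁻¹ * Φ y
  have hw : memV Ω w := hv.sub_const_mul hΦ c⁻¹
  have hΦc := hΦ.1.continuous_gradient
  have hwc := hw.1.continuous_gradient
  have hgrad (x) : gradient v x = gradient w x + c⁻¹ • gradient Φ x := by
    rw [gradient_sub_const_mul (hv.1.differentiable one_ne_zero x)
      (hΦ.1.differentiable one_ne_zero x), sub_add_cancel]
  have hpoint (x) : ‖gradient v x‖ ^ 2 = ‖gradient w x‖ ^ 2
      + 2 * c⁻¹ * ⟪gradient w x, gradient Φ x⟫ + c⁻¹ ^ 2 * ‖gradient Φ x‖ ^ 2 := by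
    rw [hgrad, norm_add_sq_real, real_inner_smul_right, norm_smul, mul_pow, Real.norm_eq_abs,
      sq_abs]
    ring
  have hcross : ∫ x in Ω, ⟪gradient w x, gradient Φ x⟫ = 1 - c⁻¹ * c := by
    rw [hGreen w hw, integral_sub (hv.1.continuous.integrableOn_of_isBounded hΩb)
      ((hΦ.1.continuous.integrableOn_of_isBounded hΩb).const_mul _), integral_const_mul, hv1]
  have henergy : ∫ x in Ω, ‖gradient Φ x‖ ^ 2 = c := by
    simpa [real_inner_self_eq_norm_sq] using hGreen Φ hΦ
  -- true also for `c = 0` (where `c⁻¹ = 0`), so no sign condition on `∫ Φ` is needed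
  have hc : c⁻¹ * c * c⁻¹ = c⁻¹ := by simpa using mul_inv_mul_cancel c⁻¹
  simp_rw [hpoint]
  rw [integral_add, integral_add, integral_const_mul, integral_const_mul, hcross, henergy]
  · linear_combination (-1 : ℝ) * hc
  all_goals exact Continuous.integrableOn_of_isBounded (by fun_prop) hΩb

end MemV

theorem stmt_17_general {n : ℕ} (hn : 1 ≤ n) {Ω : Set (EuclideanSpace ℝ (Fin n))}
    (hΩo : IsOpen Ω) (hΩb : Bornology.IsBounded Ω) (hΩc : IsConnected Ω)
    {Φ : EuclideanSpace ℝ (Fin n) → ℝ} (hΦV : memV Ω Φ)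
    (hΦne : ∃ x ∈ closure Ω, Φ x ≠ 0)
    (hGreen : ∀ v : EuclideanSpace ℝ (Fin n) → ℝ, memV Ω v →
      (∫ x in Ω, ⟪gradient v x, gradient Φ x⟫) = ∫ x in Ω, v x) :
    (∫ x in Ω, Φ x) = (∫ x in Ω, ‖gradient Φ x‖ ^ 2) ∧
    0 < (∫ x in Ω, Φ x) ∧
    ∀ v : EuclideanSpace ℝ (Fin n) → ℝ, memV Ω v → (∫ x in Ω, v x) = 1 →
      (1 / ∫ x in Ω, Φ x) ≤ (∫ x in Ω, ‖gradient v x‖ ^ 2) ∧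
      ((∫ x in Ω, ‖gradient v x‖ ^ 2) = 1 / ∫ x in Ω, Φ x ↔
        ∀ x ∈ closure Ω, v x = Φ x / ∫ y in Ω, Φ y) := by
  have henergy : ∫ x in Ω, Φ x = ∫ x in Ω, ‖gradient Φ x‖ ^ 2 := by
    simpa [real_inner_self_eq_norm_sq] using (hGreen Φ hΦV).symm
  have hpos : 0 < ∫ x in Ω, Φ x := by
    refine (henergy ▸ setIntegral_nonneg hΩo.measurableSet fun x _ => sq_nonneg _).lt_of_ne
      fun h => ?_
    obtain ⟨x, hx, hΦx⟩ := hΦne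
    exact hΦx ((hΦV.integral_norm_gradient_sq_eq_zero_iff hn hΩo hΩb hΩc).1
      (henergy ▸ h.symm) x hx)
  refine ⟨henergy, hpos, fun v hv hv1 => ?_⟩
  have hw := hv.sub_const_mul hΦV (∫ x in Ω, Φ x)⁻¹
  rw [integral_norm_gradient_sq_eq_add_inv_integral hΩb hΦV hGreen hv hv1, one_div,
    add_eq_right, hw.integral_norm_gradient_sq_eq_zero_iff hn hΩo hΩb hΩc]
  refine ⟨le_add_of_nonneg_left (setIntegral_nonneg hΩo.measurableSet fun x _ => sq_nonneg _),
    ?_⟩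
  simp only [sub_eq_zero, div_eq_inv_mul]

/-- Among C¹ functions of unit mass vanishing on ∂Ω, the Dirichlet integral is
minimized exactly by Φ/∫_Ω Φ, where −ΔΦ = 1 in Ω, Φ = 0 on ∂Ω, with minimum
value 1/∫_Ω Φ. -/
theorem stmt_17 {n : ℕ} (hn : 1 ≤ n) {Ω : Set (EuclideanSpace ℝ (Fin n))}
    (hΩo : IsOpen Ω) (hΩb : Bornology.IsBounded Ω) (hΩc : IsConnected Ω)
    {Φ : EuclideanSpace ℝ (Fin n) → ℝ} (hΦV : memV Ω Φ)
    (hΦ2 : ContDiffOn ℝ 2 Φ Ω) (hΦeq : ∀ x ∈ Ω, lapl Φ x = -1)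
    (hΦne : ∃ x ∈ closure Ω, Φ x ≠ 0)
    (hGreen : ∀ v : EuclideanSpace ℝ (Fin n) → ℝ, memV Ω v →
      (∫ x in Ω, ⟪gradient v x, gradient Φ x⟫) = ∫ x in Ω, v x) :
    (∫ x in Ω, Φ x) = (∫ x in Ω, ‖gradient Φ x‖ ^ 2) ∧
    0 < (∫ x in Ω, Φ x) ∧
    ∀ v : EuclideanSpace ℝ (Fin n) → ℝ, memV Ω v → (∫ x in Ω, v x) = 1 →
      (1 / ∫ x in Ω, Φ x) ≤ (∫ x in Ω, ‖gradient v x‖ ^ 2) ∧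
      ((∫ x in Ω, ‖gradient v x‖ ^ 2) = 1 / ∫ x in Ω, Φ x ↔
        ∀ x ∈ closure Ω, v x = Φ x / ∫ y in Ω, Φ y) :=
  stmt_17_general hn hΩo hΩb hΩc hΦV hΦne hGreen
end
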